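/- With $L$, $L'$, $k$, $d = \gcd(n,k)$, $U$ as in the kernel setup, and $T_d^n(X) = \sum_{i=0}^{n/d - 1} X^{p^{di}}$: the equation $L(x) = a$ with $a \in \mathbb{F}_{p^n}$ has a solution $x \in \mathbb{F}_{p^n}$ if and only if $U(T_d^n(a)) = 0$. -/
import Mathlib

open Polynomial

noncomputable def Tpoly (p l k : ℕ) : Polynomial (ZMod p) :=
  ∑ i ∈ Finset.range (k / l), X ^ p ^ (l * i)

noncomputable def Spoly (p l k : ℕ) : Polynomial (ZMod p) :=
  ∑ i ∈ Finset.range (k / l), C ((-1 : ZMod p) ^ i) * X ^ p ^ (l * i)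

noncomputable def linAssoc (p : ℕ) (l : Polynomial (ZMod p)) : Polynomial (ZMod p) :=
  ∑ i ∈ l.support, C (l.coeff i) * X ^ p ^ i

section basics
variable (p : ℕ) [Fact p.Prime]

lemma linAssoc_eq_sum (f : Polynomial (ZMod p)) :
    linAssoc p f = f.sum fun i c => C c * X ^ p ^ i := rfl

lemma linAssoc_add (f g : Polynomial (ZMod p)) :
    linAssoc p (f + g) = linAssoc p f + linAssoc p g := by
  simp only [linAssoc_eq_sum]
  exact Polynomial.sum_add_index f g _ (by simp) (by intros; rw [map_add, add_mul])

lemma linAssoc_monomial (i : ℕ) (c : ZMod p) :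
    linAssoc p (monomial i c) = C c * X ^ p ^ i := by
  rw [linAssoc_eq_sum]
  exact Polynomial.sum_monomial_index c _ (by simp)

noncomputable def linAssocHom : Polynomial (ZMod p) →+ Polynomial (ZMod p) :=
  { toFun := linAssoc p,
    map_zero' := by simp [linAssoc_eq_sum],
    map_add' := linAssoc_add p }

lemma coeff_linAssoc (f : Polynomial (ZMod p)) (i : ℕ) :
    (linAssoc p f).coeff (p ^ i) = f.coeff i := by
  have hp2 : 2 ≤ p := (Fact.out : p.Prime).two_le
  induction f using Polynomial.induction_on' with
  | add f g hf hg => rw [linAssoc_add]; simp [hf, hg]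
  | monomial j c =>
    rw [linAssoc_monomial]
    rw [coeff_monomial]
    rw [coeff_C_mul, coeff_X_pow]
    by_cases hji : j = i
    · simp [hji]
    · have : p ^ j ≠ p ^ i := fun hc => hji (Nat.pow_right_injective hp2 hc)
      simp only [if_neg hji, if_neg (Ne.symm this)]
      simp

lemma linAssoc_injective : Function.Injective (linAssoc p) := by
  intro f g hfg
  ext i
  rw [← coeff_linAssoc p f i, ← coeff_linAssoc p g i, hfg]

lemma linAssoc_C_mul (c : ZMod p) (f : Polynomial (ZMod p)) :
    linAssoc p (C c * f) = C c * linAssoc p f := by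
  induction f using Polynomial.induction_on' with
  | add f g hf hg => rw [mul_add, linAssoc_add, linAssoc_add, hf, hg, mul_add]
  | monomial j b =>
    rw [C_mul_monomial, linAssoc_monomial, linAssoc_monomial, map_mul, mul_assoc]

lemma X_dvd_linAssoc (f : Polynomial (ZMod p)) : X ∣ linAssoc p f := by
  rw [linAssoc_eq_sum]
  apply Finset.dvd_sum
  intro i _
  have : (X : Polynomial (ZMod p)) ∣ X ^ p ^ i :=
    dvd_pow_self X (pow_pos (Fact.out : p.Prime).pos i).ne'
  exact Dvd.dvd.mul_left this _

lemma linAssoc_zero : linAssoc p 0 = 0 := by simp [linAssoc_eq_sum]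

lemma linAssoc_ne_zero {f : Polynomial (ZMod p)} (hf : f ≠ 0) : linAssoc p f ≠ 0 := by
  intro hc
  exact hf (linAssoc_injective p (hc.trans (linAssoc_zero p).symm))

end basics
section mul
variable (p : ℕ) [Fact p.Prime]

lemma linAssoc_sum {α : Type*} (s : Finset α) (h : α → Polynomial (ZMod p)) :
    linAssoc p (∑ i ∈ s, h i) = ∑ i ∈ s, linAssoc p (h i) :=
  map_sum (linAssocHom p) _ _

lemma linAssoc_sub (f g : Polynomial (ZMod p)) :
    linAssoc p (f - g) = linAssoc p f - linAssoc p g :=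
  map_sub (linAssocHom p) f g

lemma natDegree_linAssoc {f : Polynomial (ZMod p)} (hf : f ≠ 0) :
    (linAssoc p f).natDegree = p ^ f.natDegree := by
  have hp1 : 1 ≤ p := (Fact.out : p.Prime).pos
  apply le_antisymm
  · unfold linAssoc
    apply Polynomial.natDegree_sum_le_of_forall_le
    intro i hi
    calc (C (f.coeff i) * X ^ p ^ i).natDegree ≤ (X ^ p ^ i : Polynomial (ZMod p)).natDegree := by
          apply Polynomial.natDegree_C_mul_le
      _ = p ^ i := Polynomial.natDegree_X_pow _
      _ ≤ p ^ f.natDegree :=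
          Nat.pow_le_pow_right hp1 (Polynomial.le_natDegree_of_mem_supp i hi)
  · apply Polynomial.le_natDegree_of_ne_zero
    rw [coeff_linAssoc]
    exact Polynomial.leadingCoeff_ne_zero.mpr hf

lemma linAssoc_mul (f g : Polynomial (ZMod p)) :
    linAssoc p (f * g) = (linAssoc p f).comp (linAssoc p g) := by
  induction f using Polynomial.induction_on' with
  | add f1 f2 h1 h2 =>
      rw [add_mul, linAssoc_add, h1, h2, linAssoc_add, Polynomial.add_comp]
  | monomial i c =>
    rw [linAssoc_monomial, Polynomial.mul_comp, Polynomial.C_comp, Polynomial.X_pow_comp]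
    have hrhs : (linAssoc p g) ^ p ^ i = ∑ j ∈ g.support, C (g.coeff j) * X ^ p ^ (i + j) := by
      unfold linAssoc
      rw [← iterateFrobenius_def (R := Polynomial (ZMod p)) p i, map_sum]
      apply Finset.sum_congr rfl
      intro j _
      rw [iterateFrobenius_def, mul_pow, ← map_pow, ZMod.pow_card_pow, ← pow_mul,
        ← pow_add, Nat.add_comm j i]
    have hlhs : monomial i c * g = ∑ j ∈ g.support, monomial (i + j) (c * g.coeff j) := by
      conv_lhs => rw [g.as_sum_support, Finset.mul_sum]
      apply Finset.sum_congr rfl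
      intro j _
      rw [Polynomial.monomial_mul_monomial]
    rw [hlhs, linAssoc_sum, hrhs, Finset.mul_sum]
    apply Finset.sum_congr rfl
    intro j _
    rw [linAssoc_monomial, map_mul, mul_assoc]

lemma linAssoc_one_sub_X_pow (k : ℕ) (hk : 0 < k) :
    linAssoc p (1 - X ^ k) = X - X ^ p ^ k := by
  have h1 : (1 : Polynomial (ZMod p)) = monomial 0 1 := by simp
  have h2 : (X ^ k : Polynomial (ZMod p)) = monomial k 1 := by simp [Polynomial.X_pow_eq_monomial]
  rw [linAssoc_sub, h1, h2, linAssoc_monomial, linAssoc_monomial]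
  simp

lemma linAssoc_X_pow_sub_one (k : ℕ) (hk : 0 < k) :
    linAssoc p (X ^ k - 1) = X ^ p ^ k - X := by
  have : (X ^ k - 1 : Polynomial (ZMod p)) = -(1 - X ^ k) := by ring
  have hneg : linAssoc p (-(1 - X ^ k)) = -linAssoc p (1 - X^k) := map_neg (linAssocHom p) _
  rw [this, hneg, linAssoc_one_sub_X_pow p k hk]
  ring

end mul
section eval
variable (p : ℕ) [Fact p.Prime] (n : ℕ)

noncomputable def frobLin : Module.End (ZMod p) (GaloisField p n) where
  toFun := fun x => x ^ p
  map_add' := fun x y => add_pow_char x y p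
  map_smul' := by
    intro c x
    simp only [RingHom.id_apply]
    rw [Algebra.smul_def, Algebra.smul_def, mul_pow, ← map_pow, ZMod.pow_card]

lemma frobLin_apply (x : GaloisField p n) : frobLin p n x = x ^ p := rfl

lemma frobLin_pow (i : ℕ) : ∀ x : GaloisField p n, (frobLin p n ^ i) x = x ^ p ^ i := by
  induction i with
  | zero => intro x; simp
  | succ i ih =>
    intro x
    rw [pow_succ, Module.End.mul_apply, frobLin_apply, ih (x ^ p), ← pow_mul, ← pow_succ']

lemma aeval_linAssoc (f : Polynomial (ZMod p)) (x : GaloisField p n) :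
    aeval x (linAssoc p f) = aeval (frobLin p n) f x := by
  induction f using Polynomial.induction_on' with
  | add f g hf hg => rw [linAssoc_add, map_add, map_add, LinearMap.add_apply, hf, hg]
  | monomial i c =>
    rw [linAssoc_monomial, map_mul, aeval_C, map_pow, aeval_X,
      Polynomial.aeval_monomial, Module.End.mul_apply, Module.algebraMap_end_apply,
      frobLin_pow, Algebra.smul_def]

lemma galois_pow_card (hn : n ≠ 0) (x : GaloisField p n) : x ^ p ^ n = x := by
  letI : Fintype (GaloisField p n) := Fintype.ofFinite _
  have hc : Fintype.card (GaloisField p n) = p ^ n := by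
    rw [← Nat.card_eq_fintype_card, GaloisField.card p n hn]
  rw [← hc]
  exact FiniteField.pow_card x

lemma frob_ann (hn : n ≠ 0) : aeval (frobLin p n) ((X : Polynomial (ZMod p)) ^ n - 1) = 0 := by
  apply LinearMap.ext
  intro x
  rw [map_sub, map_pow, aeval_X, map_one, LinearMap.sub_apply, frobLin_pow,
    Module.End.one_apply, galois_pow_card p n hn, LinearMap.zero_apply, sub_self]

end eval
section count
variable (p : ℕ) [Fact p.Prime] (n : ℕ)

lemma card_ker (hn : n ≠ 0) {g : Polynomial (ZMod p)} (hg : g ≠ 0)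
    (hdvd : g ∣ (X : Polynomial (ZMod p)) ^ n - 1) :
    Nat.card {x : GaloisField p n // aeval (frobLin p n) g x = 0} = p ^ g.natDegree := by
  classical
  set F := GaloisField p n
  letI : Fintype F := Fintype.ofFinite F
  have hp2 : 2 ≤ p := (Fact.out : p.Prime).two_le
  have hpn1 : 1 < p ^ n := Nat.one_lt_pow hn (by omega)
  have hcard : Fintype.card F = p ^ n := by
    rw [← Nat.card_eq_fintype_card, GaloisField.card p n hn]
  obtain ⟨m, hm⟩ := hdvd
  have hXn : ((X : Polynomial (ZMod p)) ^ n - 1) ≠ 0 := by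
    simpa using Polynomial.X_pow_sub_C_ne_zero (Nat.pos_of_ne_zero hn) (1 : ZMod p)
  have hm0 : m ≠ 0 := by
    intro hc
    rw [hc, mul_zero] at hm
    exact hXn hm
  -- linearized divisibility
  have hdiv : linAssoc p g ∣ (X ^ p ^ n - X : Polynomial (ZMod p)) := by
    rw [← linAssoc_X_pow_sub_one p n (Nat.pos_of_ne_zero hn), hm, mul_comm, linAssoc_mul]
    obtain ⟨h2, hh2⟩ := X_dvd_linAssoc p m
    rw [hh2, Polynomial.mul_comp, Polynomial.X_comp]
    exact dvd_mul_right _ _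
  set φ := algebraMap (ZMod p) F with hφ
  have hφinj : Function.Injective φ := φ.injective
  set G := Polynomial.map φ (linAssoc p g) with hG
  have hGdvd : G ∣ (X ^ p ^ n - X : Polynomial F) := by
    have := Polynomial.map_dvd φ hdiv
    simpa using this
  have h1 : (X ^ p ^ n - X : Polynomial F).natDegree = p ^ n := by
    have h2 : ((X : Polynomial F) ^ p ^ n - X).natDegree = (X ^ p ^ n : Polynomial F).natDegree := by
      apply Polynomial.natDegree_sub_eq_left_of_natDegree_lt
      simpa using hpn1
    simpa using h2
  have hne : (X ^ p ^ n - X : Polynomial F) ≠ 0 := by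
    intro hc
    rw [hc] at h1
    simp at h1
    omega
  have hG0 : G ≠ 0 := by
    rw [hG, Polynomial.map_ne_zero_iff hφinj]
    exact linAssoc_ne_zero p hg
  obtain ⟨H, hH⟩ := hGdvd
  have hH0 : H ≠ 0 := by
    intro hc
    rw [hc, mul_zero] at hH
    exact hne hH
  have hdegGH : G.natDegree + H.natDegree = p ^ n := by
    rw [← Polynomial.natDegree_mul hG0 hH0, ← hH, h1]
  have hrootsall : (X ^ p ^ n - X : Polynomial F).roots = (Finset.univ : Finset F).val := by
    rw [← hcard]
    exact FiniteField.roots_X_pow_card_sub_X F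
  have hrootscard : Multiset.card (X ^ p ^ n - X : Polynomial F).roots = p ^ n := by
    rw [hrootsall]
    simpa [← hcard] using rfl
  have hmulroots : (X ^ p ^ n - X : Polynomial F).roots = G.roots + H.roots := by
    rw [hH]
    exact Polynomial.roots_mul (hH ▸ hne)
  have hcardG : Multiset.card G.roots = G.natDegree := by
    have h1 : Multiset.card G.roots ≤ G.natDegree := Polynomial.card_roots' G
    have h2 : Multiset.card H.roots ≤ H.natDegree := Polynomial.card_roots' H
    have h3 : Multiset.card G.roots + Multiset.card H.roots = p ^ n := by
      rw [← Multiset.card_add, ← hmulroots, hrootscard]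
    omega
  have hnodup : G.roots.Nodup := by
    have hle : G.roots ≤ (X ^ p ^ n - X : Polynomial F).roots :=
      Polynomial.roots.le_of_dvd hne ⟨H, hH⟩
    have : ((Finset.univ : Finset F).val).Nodup := (Finset.univ : Finset F).nodup
    exact Multiset.nodup_of_le (hrootsall ▸ hle) this
  have hiff : ∀ x : F, aeval (frobLin p n) g x = 0 ↔ x ∈ G.roots := by
    intro x
    have hev : Polynomial.eval x G = aeval (frobLin p n) g x := by
      rw [hG, Polynomial.eval_map, ← Polynomial.aeval_def, aeval_linAssoc]
    rw [Polynomial.mem_roots hG0, Polynomial.IsRoot, hev]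
  calc Nat.card {x : F // aeval (frobLin p n) g x = 0}
      = Nat.card {x : F // x ∈ G.roots.toFinset} := by
        apply Nat.card_congr
        apply Equiv.subtypeEquivRight
        intro x
        rw [Multiset.mem_toFinset, hiff]
    _ = G.roots.toFinset.card := by
        rw [Nat.card_eq_fintype_card, Fintype.card_coe]
    _ = Multiset.card G.roots := Multiset.toFinset_card_of_nodup hnodup
    _ = G.natDegree := hcardG
    _ = p ^ g.natDegree := by
        rw [hG, Polynomial.natDegree_map_eq_of_injective hφinj, natDegree_linAssoc p hg]
end count
section helpers
variable (p : ℕ) [Fact p.Prime] (n : ℕ)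

lemma dvd_pow_gcd_sub_one {R : Type*} [CommRing R] (x q : R) :
    ∀ m k : ℕ, q ∣ x ^ m - 1 → q ∣ x ^ k - 1 → q ∣ x ^ Nat.gcd m k - 1 := by
  intro m
  induction m using Nat.strong_induction_on with
  | _ m ih =>
    intro k h1 h2
    rcases Nat.eq_zero_or_pos m with hm | hm
    · subst hm; simpa using h2
    · rw [Nat.gcd_rec m k]
      apply ih (k % m) (Nat.mod_lt k hm) m ?_ h1
      have hx : ∀ r j : ℕ, k = m * j + r →
          x ^ r - 1 = (x ^ k - 1) - x ^ r * ((x ^ m) ^ j - 1) := by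
        intro r j hk'
        subst hk'
        rw [pow_add, pow_mul]
        ring
      rw [hx (k % m) (k / m) (Nat.div_add_mod k m).symm]
      refine dvd_sub h2 (Dvd.dvd.mul_left ?_ _)
      exact dvd_trans h1 (by simpa using sub_dvd_pow_sub_pow (x ^ m) 1 (k / m))

lemma gcd_bezout (a b : Polynomial (ZMod p)) :
    ∃ α β : Polynomial (ZMod p), gcd a b = a * α + b * β := by
  classical
  have h1 : EuclideanDomain.gcd a b ∣ gcd a b :=
    dvd_gcd (EuclideanDomain.gcd_dvd_left a b) (EuclideanDomain.gcd_dvd_right a b)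
  obtain ⟨c, hc⟩ := h1
  refine ⟨EuclideanDomain.gcdA a b * c, EuclideanDomain.gcdB a b * c, ?_⟩
  rw [hc, EuclideanDomain.gcd_eq_gcd_ab]
  ring

lemma ker_mono {f g : Polynomial (ZMod p)} (hgf : g ∣ f) (x : GaloisField p n)
    (hx : aeval (frobLin p n) g x = 0) : aeval (frobLin p n) f x = 0 := by
  obtain ⟨c, hc⟩ := hgf
  rw [hc, mul_comm, map_mul, Module.End.mul_apply, hx, map_zero]

lemma ker_switch (hn : n ≠ 0) (f : Polynomial (ZMod p)) (x : GaloisField p n)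
    (hx : aeval (frobLin p n) f x = 0) :
    aeval (frobLin p n) (gcd f ((X : Polynomial (ZMod p)) ^ n - 1)) x = 0 := by
  obtain ⟨α, β, hab⟩ := gcd_bezout p f ((X : Polynomial (ZMod p)) ^ n - 1)
  rw [hab, mul_comm f α, mul_comm _ β, map_add, map_mul, map_mul, LinearMap.add_apply,
    Module.End.mul_apply, Module.End.mul_apply, hx, map_zero, frob_ann p n hn,
    LinearMap.zero_apply, map_zero, add_zero]

lemma Tpoly_eval (d : ℕ) (a : GaloisField p n) :
    aeval a (Tpoly p d n) =
      aeval (frobLin p n) (∑ i ∈ Finset.range (n / d), (X : Polynomial (ZMod p)) ^ (d * i)) a := by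
  rw [Tpoly, map_sum, map_sum, LinearMap.sum_apply]
  apply Finset.sum_congr rfl
  intro i _
  rw [map_pow, aeval_X, map_pow, aeval_X, frobLin_pow]

end helpers
lemma card_ker_comp {M : Type*} [AddCommGroup M] [Finite M] (A B : M →+ M) :
    Nat.card {x : M // A (B x) = 0} ≤
      Nat.card {y : M // A y = 0} * Nat.card {x : M // B x = 0} := by
  classical
  set sec : M → M := fun y => if h : ∃ x, B x = y then h.choose else 0 with hsec
  have hsecspec : ∀ y x, B x = y → B (sec y) = y := by
    intro y x hxy
    have hex : ∃ x, B x = y := ⟨x, hxy⟩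
    rw [hsec]
    simp only
    rw [dif_pos hex]
    exact hex.choose_spec
  have hΦ : Function.Injective (fun b : {x : M // A (B x) = 0} =>
      ((⟨B b.1, b.2⟩ : {y : M // A y = 0}),
       (⟨b.1 - sec (B b.1), by
          rw [map_sub, hsecspec (B b.1) b.1 rfl, sub_self]⟩ : {x : M // B x = 0}))) := by
    intro b c hbc
    rw [Prod.mk.injEq, Subtype.mk.injEq, Subtype.mk.injEq] at hbc
    obtain ⟨h1, h2⟩ := hbc
    apply Subtype.ext
    rw [h1] at h2
    exact sub_left_inj.mp h2
  calc Nat.card {x : M // A (B x) = 0}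
      ≤ Nat.card ({y : M // A y = 0} × {x : M // B x = 0}) :=
        Nat.card_le_card_of_injective _ hΦ
    _ = _ := Nat.card_prod _ _
theorem stmt10 (p : ℕ) [Fact p.Prime] (n k : ℕ) (hn : 0 < n) (hk : 0 < k)
    (l l' : Polynomial (ZMod p)) (hsqf : Squarefree (linAssoc p l))
    (h : (linAssoc p l).comp (linAssoc p l') = X - X ^ p ^ k)
    (d : ℕ) (hd : d = Nat.gcd n k)
    (t w u : Polynomial (ZMod p))
    (ht : t = ∑ i ∈ Finset.range (k / d), X ^ (d * i))
    (hw : w = gcd l' t) (hu : u = l' / w)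
    (a : GaloisField p n) :
    (∃ x : GaloisField p n, aeval x (linAssoc p l) = a) ↔
      aeval (aeval a (Tpoly p d n)) (linAssoc p u) = 0 := by
  classical
  have hp2 : 2 ≤ p := (Fact.out : p.Prime).two_le
  have hn0 : n ≠ 0 := hn.ne'
  have hd0 : 0 < d := by
    rw [hd]; exact Nat.gcd_pos_of_pos_left k hn
  have hdn : d ∣ n := by rw [hd]; exact Nat.gcd_dvd_left n k
  have hdk : d ∣ k := by rw [hd]; exact Nat.gcd_dvd_right n k
  set τ : Polynomial (ZMod p) := ∑ i ∈ Finset.range (n / d), X ^ (d * i) with hτdef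
  have hτ : τ * ((X : Polynomial (ZMod p)) ^ d - 1) = X ^ n - 1 := by
    have hτ2 : τ = ∑ i ∈ Finset.range (n / d), ((X : Polynomial (ZMod p)) ^ d) ^ i := by
      rw [hτdef]; exact Finset.sum_congr rfl fun i _ => by rw [← pow_mul]
    rw [hτ2, geom_sum_mul, ← pow_mul, Nat.mul_div_cancel' hdn]
  have htt : t * ((X : Polynomial (ZMod p)) ^ d - 1) = X ^ k - 1 := by
    have ht2 : t = ∑ i ∈ Finset.range (k / d), ((X : Polynomial (ZMod p)) ^ d) ^ i := by
      rw [ht]; exact Finset.sum_congr rfl fun i _ => by rw [← pow_mul]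
    rw [ht2, geom_sum_mul, ← pow_mul, Nat.mul_div_cancel' hdk]
  have hXd : ((X : Polynomial (ZMod p)) ^ d - 1) ≠ 0 := by
    simpa using Polynomial.X_pow_sub_C_ne_zero hd0 (1 : ZMod p)
  have hXn : ((X : Polynomial (ZMod p)) ^ n - 1) ≠ 0 := by
    simpa using Polynomial.X_pow_sub_C_ne_zero hn (1 : ZMod p)
  have hXk : ((X : Polynomial (ZMod p)) ^ k - 1) ≠ 0 := by
    simpa using Polynomial.X_pow_sub_C_ne_zero hk (1 : ZMod p)
  have hll' : l * l' = 1 - X ^ k := by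
    apply linAssoc_injective p
    rw [linAssoc_mul, h, linAssoc_one_sub_X_pow p k hk]
  have h1Xk : (1 - X ^ k : Polynomial (ZMod p)) ≠ 0 := by
    intro hc
    apply hXk
    have h2 : ((X : Polynomial (ZMod p)) ^ k - 1) = -(1 - X ^ k) := by ring
    rw [h2, hc, neg_zero]
  have hprod : l * l' ≠ 0 := by rw [hll']; exact h1Xk
  have hl0 : l ≠ 0 := left_ne_zero_of_mul hprod
  have hl'0 : l' ≠ 0 := right_ne_zero_of_mul hprod
  have hwl' : w ∣ l' := by rw [hw]; exact gcd_dvd_left l' t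
  have hwt : w ∣ t := by rw [hw]; exact gcd_dvd_right l' t
  have hw0 : w ≠ 0 := by
    intro hc; rw [hc] at hwl'; exact hl'0 (zero_dvd_iff.mp hwl')
  have huw : w * u = l' := by rw [hu]; exact EuclideanDomain.mul_div_cancel' hw0 hwl'
  have hu0 : u ≠ 0 := by intro hc; apply hl'0; rw [← huw, hc, mul_zero]
  set s : Polynomial (ZMod p) := t / w with hsdef
  have hws : w * s = t := EuclideanDomain.mul_div_cancel' hw0 hwt
  have ht0 : t ≠ 0 := by intro hc; apply hXk; rw [← htt, hc, zero_mul]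
  have hs0 : s ≠ 0 := by intro hc; apply ht0; rw [← hws, hc, mul_zero]
  have hlu : l * u = -(s * ((X : Polynomial (ZMod p)) ^ d - 1)) := by
    apply mul_left_cancel₀ hw0
    calc w * (l * u) = l * (w * u) := by ring
      _ = 1 - X ^ k := by rw [huw, hll']
      _ = -(t * (X ^ d - 1)) := by rw [htt]; ring
      _ = w * -(s * (X ^ d - 1)) := by rw [← hws]; ring
  have hcop : IsCoprime u s := by
    have h1 : w * gcd u s ∣ gcd l' t := by
      apply dvd_gcd
      · rw [← huw]; exact mul_dvd_mul_left w (gcd_dvd_left u s)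
      · rw [← hws]; exact mul_dvd_mul_left w (gcd_dvd_right u s)
    rw [← hw] at h1
    have h2 : w * gcd u s ∣ w * 1 := by rwa [mul_one]
    have hcd : gcd u s ∣ 1 := (mul_dvd_mul_iff_left hw0).mp h2
    obtain ⟨α, β, hab⟩ := gcd_bezout p u s
    obtain ⟨e, he⟩ := hcd
    exact ⟨α * e, β * e, by rw [he, hab]; ring⟩
  have hum : u ∣ (X : Polynomial (ZMod p)) ^ d - 1 := by
    apply hcop.dvd_of_dvd_mul_right
    have h3 : u ∣ l * u := dvd_mul_left u l
    rw [hlu, dvd_neg] at h3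
    rwa [mul_comm] at h3
  set m' : Polynomial (ZMod p) := ((X : Polynomial (ZMod p)) ^ d - 1) / u with hm'def
  have hum' : u * m' = (X : Polynomial (ZMod p)) ^ d - 1 :=
    EuclideanDomain.mul_div_cancel' hu0 hum
  have hleq : l = -(m' * s) := by
    apply mul_right_cancel₀ hu0
    rw [hlu, ← hum']; ring
  set g₁ : Polynomial (ZMod p) := gcd l ((X : Polynomial (ZMod p)) ^ n - 1) with hg₁def
  have hg₁l : g₁ ∣ l := gcd_dvd_left _ _
  have hg₁n : g₁ ∣ (X : Polynomial (ZMod p)) ^ n - 1 := gcd_dvd_right _ _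
  have hg₁0 : g₁ ≠ 0 := by
    intro hc; rw [hc] at hg₁l; exact hl0 (zero_dvd_iff.mp hg₁l)
  have hg₁k : g₁ ∣ (X : Polynomial (ZMod p)) ^ k - 1 := by
    refine hg₁l.trans ⟨-l', ?_⟩
    rw [mul_neg, hll']; ring
  have hg₁d : g₁ ∣ (X : Polynomial (ZMod p)) ^ d - 1 := by
    rw [hd]
    exact dvd_pow_gcd_sub_one X g₁ n k hg₁n hg₁k
  have hg₁m' : g₁ ∣ m' := by
    obtain ⟨a', b', hab⟩ := hcop
    have h1 : g₁ ∣ m' * u := by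
      have := hg₁d; rwa [← hum', mul_comm] at this
    have h2 : g₁ ∣ m' * s := by
      have h3 : g₁ ∣ -(m' * s) := by rw [← hleq]; exact hg₁l
      rwa [dvd_neg] at h3
    have h4 : m' = a' * (m' * u) + b' * (m' * s) := by
      calc m' = m' * 1 := (mul_one m').symm
        _ = m' * (a' * u + b' * s) := by rw [hab]
        _ = a' * (m' * u) + b' * (m' * s) := by ring
    rw [h4]
    exact dvd_add (h1.mul_left a') (h2.mul_left b')
  have hug₁ : u * g₁ ∣ (X : Polynomial (ZMod p)) ^ d - 1 := by
    rw [← hum']; exact mul_dvd_mul_left u hg₁m'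
  have hdegXd : ((X : Polynomial (ZMod p)) ^ d - 1).natDegree = d := by
    have h5 : ((X : Polynomial (ZMod p)) ^ d - 1) = X ^ d - C 1 := by simp
    rw [h5, Polynomial.natDegree_X_pow_sub_C]
  have hdegXn : ((X : Polynomial (ZMod p)) ^ n - 1).natDegree = n := by
    have h5 : ((X : Polynomial (ZMod p)) ^ n - 1) = X ^ n - C 1 := by simp
    rw [h5, Polynomial.natDegree_X_pow_sub_C]
  have hdeg1 : u.natDegree + g₁.natDegree ≤ d := by
    have h6 := Polynomial.natDegree_le_of_dvd hug₁ hXd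
    rwa [Polynomial.natDegree_mul hu0 hg₁0, hdegXd] at h6
  have hτ0 : τ ≠ 0 := by intro hc; apply hXn; rw [← hτ, hc, zero_mul]
  have hτn : τ ∣ (X : Polynomial (ZMod p)) ^ n - 1 := ⟨X ^ d - 1, hτ.symm⟩
  have hdτ : τ.natDegree + d = n := by
    have h7 := Polynomial.natDegree_mul hτ0 hXd
    rw [hτ, hdegXn, hdegXd] at h7
    omega
  have hun : u ∣ (X : Polynomial (ZMod p)) ^ n - 1 :=
    hum.trans ⟨τ, by rw [← hτ]; ring⟩
  -- RHS reformulation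
  have hRHS : ∀ b : GaloisField p n,
      (aeval (aeval b (Tpoly p d n)) (linAssoc p u) = 0) ↔
        aeval (frobLin p n) (u * τ) b = 0 := by
    intro b
    have hT := Tpoly_eval p n d b
    rw [← hτdef] at hT
    rw [aeval_linAssoc, hT, map_mul, Module.End.mul_apply]
  -- range ⊆ kernel
  have hincl : ∀ x : GaloisField p n,
      aeval (frobLin p n) (u * τ) (aeval (frobLin p n) l x) = 0 := by
    intro x
    have hpoly : u * τ * l = (-s) * ((X : Polynomial (ZMod p)) ^ n - 1) := by
      calc u * τ * l = (l * u) * τ := by ring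
        _ = -(s * (X ^ d - 1)) * τ := by rw [hlu]
        _ = (-s) * (τ * (X ^ d - 1)) := by ring
        _ = (-s) * (X ^ n - 1) := by rw [hτ]
    have h8 : aeval (frobLin p n) (u * τ) (aeval (frobLin p n) l x)
        = aeval (frobLin p n) (u * τ * l) x := by
      rw [map_mul (aeval (frobLin p n)) (u * τ) l, Module.End.mul_apply]
    rw [h8, hpoly, map_mul, Module.End.mul_apply, frob_ann p n hn0,
      LinearMap.zero_apply, map_zero]
  letI : Fintype (GaloisField p n) := Fintype.ofFinite _
  set Rset : Set (GaloisField p n) :=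
    Set.range (fun x => aeval (frobLin p n) l x) with hRset
  set Kset : Set (GaloisField p n) :=
    {b | aeval (frobLin p n) (u * τ) b = 0} with hKset
  have hsub : Rset ⊆ Kset := by
    rintro b ⟨x, rfl⟩
    exact hincl x
  -- card of Kset
  have hKcard : Nat.card ↥Kset ≤ p ^ (u.natDegree + τ.natDegree) := by
    have hAB := card_ker_comp ((aeval (frobLin p n) u : Module.End (ZMod p) (GaloisField p n)).toAddMonoidHom)
      ((aeval (frobLin p n) τ : Module.End (ZMod p) (GaloisField p n)).toAddMonoidHom)
    have he1 : Nat.card ↥Kset = Nat.card {x : GaloisField p n //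
        (aeval (frobLin p n) u : Module.End (ZMod p) (GaloisField p n)).toAddMonoidHom
          ((aeval (frobLin p n) τ : Module.End (ZMod p) (GaloisField p n)).toAddMonoidHom x) = 0} := by
      apply Nat.card_congr
      apply Equiv.subtypeEquivRight
      intro x
      show aeval (frobLin p n) (u * τ) x = 0 ↔ _
      rw [map_mul, Module.End.mul_apply]
      rfl
    have he2 : Nat.card {y : GaloisField p n //
        (aeval (frobLin p n) u : Module.End (ZMod p) (GaloisField p n)).toAddMonoidHom y = 0}
        = p ^ u.natDegree := by
      rw [← card_ker p n hn0 hu0 hun]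
      apply Nat.card_congr
      apply Equiv.subtypeEquivRight
      intro x
      rfl
    have he3 : Nat.card {y : GaloisField p n //
        (aeval (frobLin p n) τ : Module.End (ZMod p) (GaloisField p n)).toAddMonoidHom y = 0}
        = p ^ τ.natDegree := by
      rw [← card_ker p n hn0 hτ0 hτn]
      apply Nat.card_congr
      apply Equiv.subtypeEquivRight
      intro x
      rfl
    rw [he1]
    calc Nat.card {x : GaloisField p n //
        (aeval (frobLin p n) u : Module.End (ZMod p) (GaloisField p n)).toAddMonoidHom
          ((aeval (frobLin p n) τ : Module.End (ZMod p) (GaloisField p n)).toAddMonoidHom x) = 0}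
        ≤ _ * _ := hAB
      _ = p ^ u.natDegree * p ^ τ.natDegree := by rw [he2, he3]
      _ = p ^ (u.natDegree + τ.natDegree) := by rw [← pow_add]
  -- card of kernel of l
  have hKer : Nat.card {x : GaloisField p n // aeval (frobLin p n) l x = 0}
      = p ^ g₁.natDegree := by
    have hiff : ∀ x : GaloisField p n,
        (aeval (frobLin p n) l x = 0) ↔ aeval (frobLin p n) g₁ x = 0 := by
      intro x
      constructor
      · intro hx; rw [hg₁def]; exact ker_switch p n hn0 l x hx
      · intro hx; exact ker_mono p n hg₁l x hx
    rw [Nat.card_congr (Equiv.subtypeEquivRight hiff)]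
    exact card_ker p n hn0 hg₁0 hg₁n
  have hrange_eq : Nat.card ↥Rset = Nat.card
      ↥(LinearMap.range (aeval (frobLin p n) l : Module.End (ZMod p) (GaloisField p n))) := by
    apply Nat.card_congr
    apply Equiv.setCongr
    rw [hRset, LinearMap.coe_range]
  have hquot : Nat.card (GaloisField p n)
      = Nat.card ↥(LinearMap.ker (aeval (frobLin p n) l : Module.End (ZMod p) (GaloisField p n)))
        * Nat.card (GaloisField p n ⧸ LinearMap.ker (aeval (frobLin p n) l : Module.End (ZMod p) (GaloisField p n))) :=
    Submodule.card_eq_card_quotient_mul_card _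
  have hqr : Nat.card (GaloisField p n ⧸ LinearMap.ker (aeval (frobLin p n) l : Module.End (ZMod p) (GaloisField p n)))
      = Nat.card ↥(LinearMap.range (aeval (frobLin p n) l : Module.End (ZMod p) (GaloisField p n))) :=
    Nat.card_congr (LinearMap.quotKerEquivRange _).toEquiv
  have hkerψ : Nat.card ↥(LinearMap.ker (aeval (frobLin p n) l : Module.End (ZMod p) (GaloisField p n)))
      = p ^ g₁.natDegree := by
    rw [← hKer]
    apply Nat.card_congr
    apply Equiv.subtypeEquivRight
    intro x
    exact LinearMap.mem_ker
  have hFcard : Nat.card (GaloisField p n) = p ^ n := GaloisField.card p n hn0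
  have hRcard : Nat.card ↥Rset * p ^ g₁.natDegree = p ^ n := by
    calc Nat.card ↥Rset * p ^ g₁.natDegree
        = Nat.card (GaloisField p n ⧸ LinearMap.ker (aeval (frobLin p n) l : Module.End (ZMod p) (GaloisField p n)))
          * Nat.card ↥(LinearMap.ker (aeval (frobLin p n) l : Module.End (ZMod p) (GaloisField p n))) := by
          rw [hrange_eq, ← hqr, hkerψ]
      _ = Nat.card (GaloisField p n) := by rw [hquot]; ring
      _ = p ^ n := hFcard
  have hdegg₁n : g₁.natDegree ≤ n := by
    have h9 := Polynomial.natDegree_le_of_dvd hg₁n hXn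
    rwa [hdegXn] at h9
  have hR : Nat.card ↥Rset = p ^ (n - g₁.natDegree) := by
    have h10 : Nat.card ↥Rset * p ^ g₁.natDegree
        = p ^ (n - g₁.natDegree) * p ^ g₁.natDegree := by
      rw [hRcard, ← pow_add]
      congr 1
      omega
    exact Nat.eq_of_mul_eq_mul_right (pow_pos (by omega) _) h10
  have hle : Nat.card ↥Kset ≤ Nat.card ↥Rset := by
    rw [hR]
    calc Nat.card ↥Kset ≤ p ^ (u.natDegree + τ.natDegree) := hKcard
      _ ≤ p ^ (n - g₁.natDegree) := Nat.pow_le_pow_right (by omega) (by omega)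
  have hEq : Rset = Kset :=
    Set.eq_of_subset_of_ncard_le hsub
      (by rw [← Nat.card_coe_set_eq, ← Nat.card_coe_set_eq]; exact hle)
      (Set.toFinite _)
  constructor
  · rintro ⟨x, hx⟩
    rw [hRHS a]
    have hmem : a ∈ Rset := ⟨x, by show aeval (frobLin p n) l x = a; rw [← aeval_linAssoc]; exact hx⟩
    rw [hEq] at hmem
    exact hmem
  · intro ha
    have hmem : a ∈ Kset := (hRHS a).mp ha
    rw [← hEq] at hmem
    obtain ⟨x, hx⟩ := hmem
    exact ⟨x, by rw [aeval_linAssoc]; simpa using hx⟩
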